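/- arXiv:1701.07211 — 6 statements merged into one kernel-verified Lean document; each statement's English description precedes it below -/
import Mathlib

section
/- Let r : ℝ² → ℂ³ be a smooth map and v : ℝ² → ℝ a smooth function such that for all (x,y): ⟨r,r⟩ = 1, ⟨r_x,r⟩ = ⟨r_y,r⟩ = ⟨r_x,r_y⟩ = 0 and ⟨r_x,r_x⟩ = ⟨r_y,r_y⟩ = 2e^v (so in particular r_x ≠ 0 and r_y ≠ 0), and let β : ℝ² → ℝ be a smooth function such that e^{iβ} equals the determinant of the 3×3 complex matrix whose rows are r, r_x/|r_x| and r_y/|r_y|. Then r satisfies the Schrödinger equation L r = 0, where L = (∂_x − (i/2)β_x)² + (∂_y − (i/2)β_y)² + V with potential V = 4e^v + (1/4)(β_x² + β_y²) + (i/2)(β_{xx} + β_{yy}); equivalently, r_{xx} + r_{yy} − i β_x r_x − i β_y r_y + 4 e^v r = 0. -/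
open Complex Real Matrix

/-- Partial derivative in the first variable. -/
noncomputable def pdx {E : Type*} [NormedAddCommGroup E] [NormedSpace ℝ E]
    (f : ℝ → ℝ → E) (x y : ℝ) : E := deriv (fun x' => f x' y) x

/-- Partial derivative in the second variable. -/
noncomputable def pdy {E : Type*} [NormedAddCommGroup E] [NormedSpace ℝ E]
    (f : ℝ → ℝ → E) (x y : ℝ) : E := deriv (fun y' => f x y') y

/-- Hermitian inner product ⟨a,b⟩ = ∑ aᵢ conj(bᵢ) on ℂ³. -/
noncomputable def herm (a b : Fin 3 → ℂ) : ℂ := ∑ i, a i * starRingEnd ℂ (b i)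

/-- Hermitian norm |a| = √⟨a,a⟩. -/
noncomputable def hnorm (a : Fin 3 → ℂ) : ℝ := Real.sqrt (herm a a).re

section plumbing
variable {E : Type*} [NormedAddCommGroup E] [NormedSpace ℝ E]
variable {f : ℝ → ℝ → E}

lemma hasDerivAt_slice_x (hf : ContDiff ℝ (⊤ : ℕ∞) (Function.uncurry f)) (x y : ℝ) :
    HasDerivAt (fun x' => f x' y) (fderiv ℝ (Function.uncurry f) (x, y) (1, 0)) x := by
  have hline : HasDerivAt (fun x' : ℝ => ((x' : ℝ), y)) ((1 : ℝ), (0 : ℝ)) x :=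
    (hasDerivAt_id x).prodMk (hasDerivAt_const x y)
  exact ((hf.differentiable (by simp) (x, y)).hasFDerivAt).comp_hasDerivAt x hline

lemma hasDerivAt_slice_y (hf : ContDiff ℝ (⊤ : ℕ∞) (Function.uncurry f)) (x y : ℝ) :
    HasDerivAt (fun y' => f x y') (fderiv ℝ (Function.uncurry f) (x, y) (0, 1)) y := by
  have hline : HasDerivAt (fun y' : ℝ => ((x : ℝ), y')) ((0 : ℝ), (1 : ℝ)) y :=
    (hasDerivAt_const y x).prodMk (hasDerivAt_id y)
  exact ((hf.differentiable (by simp) (x, y)).hasFDerivAt).comp_hasDerivAt y hline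

lemma pdx_eq_fderiv (hf : ContDiff ℝ (⊤ : ℕ∞) (Function.uncurry f)) (x y : ℝ) :
    pdx f x y = fderiv ℝ (Function.uncurry f) (x, y) (1, 0) :=
  (hasDerivAt_slice_x hf x y).deriv

lemma pdy_eq_fderiv (hf : ContDiff ℝ (⊤ : ℕ∞) (Function.uncurry f)) (x y : ℝ) :
    pdy f x y = fderiv ℝ (Function.uncurry f) (x, y) (0, 1) :=
  (hasDerivAt_slice_y hf x y).deriv

lemma hasDerivAt_pdx (hf : ContDiff ℝ (⊤ : ℕ∞) (Function.uncurry f)) (x y : ℝ) :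
    HasDerivAt (fun x' => f x' y) (pdx f x y) x := by
  rw [pdx_eq_fderiv hf]; exact hasDerivAt_slice_x hf x y

lemma hasDerivAt_pdy (hf : ContDiff ℝ (⊤ : ℕ∞) (Function.uncurry f)) (x y : ℝ) :
    HasDerivAt (fun y' => f x y') (pdy f x y) y := by
  rw [pdy_eq_fderiv hf]; exact hasDerivAt_slice_y hf x y

lemma contDiff_pdx (hf : ContDiff ℝ (⊤ : ℕ∞) (Function.uncurry f)) :
    ContDiff ℝ (⊤ : ℕ∞) (Function.uncurry (pdx f)) := by
  have h : Function.uncurry (pdx f)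
      = fun p : ℝ × ℝ => fderiv ℝ (Function.uncurry f) p ((1 : ℝ), (0 : ℝ)) := by
    funext p
    exact pdx_eq_fderiv hf p.1 p.2
  rw [h]
  exact (ContinuousLinearMap.apply ℝ E ((1 : ℝ), (0 : ℝ))).contDiff.comp
    (hf.fderiv_right (by simp))

lemma contDiff_pdy (hf : ContDiff ℝ (⊤ : ℕ∞) (Function.uncurry f)) :
    ContDiff ℝ (⊤ : ℕ∞) (Function.uncurry (pdy f)) := by
  have h : Function.uncurry (pdy f)
      = fun p : ℝ × ℝ => fderiv ℝ (Function.uncurry f) p ((0 : ℝ), (1 : ℝ)) := by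
    funext p
    exact pdy_eq_fderiv hf p.1 p.2
  rw [h]
  exact (ContinuousLinearMap.apply ℝ E ((0 : ℝ), (1 : ℝ))).contDiff.comp
    (hf.fderiv_right (by simp))

lemma pdx_pdy_comm (hf : ContDiff ℝ (⊤ : ℕ∞) (Function.uncurry f)) (x y : ℝ) :
    pdx (pdy f) x y = pdy (pdx f) x y := by
  have hsymm : IsSymmSndFDerivAt ℝ (Function.uncurry f) (x, y) :=
    hf.contDiffAt.isSymmSndFDerivAt
      (by rw [minSmoothness_of_isRCLikeNormedField]; exact WithTop.coe_le_coe.mpr le_top)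
  have hdfd : ContDiff ℝ (⊤ : ℕ∞) (fderiv ℝ (Function.uncurry f)) := hf.fderiv_right (by simp)
  have key : ∀ w : ℝ × ℝ, fderiv ℝ (fun p => fderiv ℝ (Function.uncurry f) p w) (x, y)
      = (ContinuousLinearMap.apply ℝ E w).comp (fderiv ℝ (fderiv ℝ (Function.uncurry f)) (x, y)) := by
    intro w
    exact ((ContinuousLinearMap.apply ℝ E w).hasFDerivAt.comp (x, y)
      ((hdfd.differentiable (by simp) (x, y)).hasFDerivAt)).fderiv
  have e1 : Function.uncurry (pdy f)
      = fun p : ℝ × ℝ => fderiv ℝ (Function.uncurry f) p ((0 : ℝ), (1 : ℝ)) := by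
    funext p; exact pdy_eq_fderiv hf p.1 p.2
  have e2 : Function.uncurry (pdx f)
      = fun p : ℝ × ℝ => fderiv ℝ (Function.uncurry f) p ((1 : ℝ), (0 : ℝ)) := by
    funext p; exact pdx_eq_fderiv hf p.1 p.2
  have l1 : pdx (pdy f) x y
      = fderiv ℝ (fderiv ℝ (Function.uncurry f)) (x, y) (1, 0) (0, 1) := by
    rw [pdx_eq_fderiv (contDiff_pdy hf) x y, e1, key]
    rfl
  have l2 : pdy (pdx f) x y
      = fderiv ℝ (fderiv ℝ (Function.uncurry f)) (x, y) (0, 1) (1, 0) := by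
    rw [pdy_eq_fderiv (contDiff_pdx hf) x y, e2, key]
    rfl
  rw [l1, l2, hsymm]

end plumbing

lemma herm_conj (a b : Fin 3 → ℂ) : herm b a = starRingEnd ℂ (herm a b) := by
  simp only [herm, map_sum, _root_.map_mul, Complex.conj_conj]
  exact Finset.sum_congr rfl fun i _ => mul_comm _ _

lemma herm_add_left (a b c : Fin 3 → ℂ) : herm (a + b) c = herm a c + herm b c := by
  simp [herm, add_mul, Finset.sum_add_distrib]

lemma herm_sub_left (a b c : Fin 3 → ℂ) : herm (a - b) c = herm a c - herm b c := by
  simp [herm, sub_mul, Finset.sum_sub_distrib]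

lemma herm_smul_left (c : ℂ) (a b : Fin 3 → ℂ) : herm (c • a) b = c * herm a b := by
  simp [herm, Finset.mul_sum, mul_assoc]

section hermderiv
variable {a b : ℝ → Fin 3 → ℂ} {a' b' : Fin 3 → ℂ} {t : ℝ}

lemma HasDerivAt.herm' (ha : HasDerivAt a a' t) (hb : HasDerivAt b b' t) :
    HasDerivAt (fun s => herm (a s) (b s)) (herm a' (b t) + herm (a t) b') t := by
  have hcomp : ∀ (c : ℝ → Fin 3 → ℂ) (c' : Fin 3 → ℂ), HasDerivAt c c' t → ∀ i : Fin 3,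
      HasDerivAt (fun s => c s i) (c' i) t := fun c c' hc i =>
    (ContinuousLinearMap.proj (R := ℝ) (φ := fun _ : Fin 3 => ℂ) i).hasFDerivAt.comp_hasDerivAt t hc
  have hconj : ∀ i : Fin 3, HasDerivAt (fun s => starRingEnd ℂ (b s i)) (starRingEnd ℂ (b' i)) t := by
    intro i
    have := (Complex.conjCLE.toContinuousLinearMap.hasFDerivAt).comp_hasDerivAt t (hcomp b b' hb i)
    exact this
  have hterm : ∀ i : Fin 3, HasDerivAt (fun s => a s i * starRingEnd ℂ (b s i))
      (a' i * starRingEnd ℂ (b t i) + a t i * starRingEnd ℂ (b' i)) t := fun i =>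
    (hcomp a a' ha i).mul (hconj i)
  have hsum : HasDerivAt (fun s => ∑ i : Fin 3, a s i * starRingEnd ℂ (b s i))
      (∑ i : Fin 3, (a' i * starRingEnd ℂ (b t i) + a t i * starRingEnd ℂ (b' i))) t :=
    HasDerivAt.fun_sum fun i _ => hterm i
  have : (∑ i : Fin 3, (a' i * starRingEnd ℂ (b t i) + a t i * starRingEnd ℂ (b' i)))
      = herm a' (b t) + herm (a t) b' := by
    simp [herm, Finset.sum_add_distrib]
  rw [← this]
  exact hsum

end hermderiv

lemma det_rows (a b c : Fin 3 → ℂ) : (Matrix.of ![a, b, c]).det =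
    a 0 * b 1 * c 2 - a 0 * b 2 * c 1 - a 1 * b 0 * c 2
      + a 1 * b 2 * c 0 + a 2 * b 0 * c 1 - a 2 * b 1 * c 0 := by
  simp [Matrix.det_fin_three]
  try ring

lemma mul_conjT (a b c d e f : Fin 3 → ℂ) :
    (Matrix.of ![a, b, c]) * (Matrix.of ![d, e, f])ᴴ =
      Matrix.of ![![herm a d, herm a e, herm a f],
        ![herm b d, herm b e, herm b f],
        ![herm c d, herm c e, herm c f]] := by
  ext i j
  fin_cases i <;> fin_cases j <;>
    simp [Matrix.mul_apply, Matrix.conjTranspose_apply, herm, Fin.sum_univ_three]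

lemma det_gram (a b c d e f : Fin 3 → ℂ) :
    (Matrix.of ![a, b, c]).det * starRingEnd ℂ ((Matrix.of ![d, e, f]).det) =
      herm a d * herm b e * herm c f - herm a d * herm b f * herm c e
      - herm a e * herm b d * herm c f + herm a e * herm b f * herm c d
      + herm a f * herm b d * herm c e - herm a f * herm b e * herm c d := by
  have h1 : (Matrix.of ![a, b, c]).det * starRingEnd ℂ ((Matrix.of ![d, e, f]).det)
      = ((Matrix.of ![a, b, c]) * (Matrix.of ![d, e, f])ᴴ).det := by
    rw [Matrix.det_mul, Matrix.det_conjTranspose]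
    rfl
  rw [h1, mul_conjT]
  simp [Matrix.det_fin_three]
  try ring

section detderiv
variable {a b c : ℝ → Fin 3 → ℂ} {a' b' c' : Fin 3 → ℂ} {t : ℝ}

lemma hasDerivAt_det_rows (ha : HasDerivAt a a' t) (hb : HasDerivAt b b' t)
    (hc : HasDerivAt c c' t) :
    HasDerivAt (fun s => (Matrix.of ![a s, b s, c s]).det)
      ((Matrix.of ![a', b t, c t]).det + (Matrix.of ![a t, b', c t]).det
        + (Matrix.of ![a t, b t, c']).det) t := by
  have P : ∀ (g : ℝ → Fin 3 → ℂ) (g' : Fin 3 → ℂ), HasDerivAt g g' t → ∀ i : Fin 3,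
      HasDerivAt (fun s => g s i) (g' i) t := fun g g' hg i =>
    (ContinuousLinearMap.proj (R := ℝ) (φ := fun _ : Fin 3 => ℂ) i).hasFDerivAt.comp_hasDerivAt t hg
  simp only [det_rows]
  have H := ((((((P a a' ha 0).mul (P b b' hb 1)).mul (P c c' hc 2)).sub
    (((P a a' ha 0).mul (P b b' hb 2)).mul (P c c' hc 1))).sub
    (((P a a' ha 1).mul (P b b' hb 0)).mul (P c c' hc 2))).add
    (((P a a' ha 1).mul (P b b' hb 2)).mul (P c c' hc 0))).add
    (((P a a' ha 2).mul (P b b' hb 0)).mul (P c c' hc 1))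
  have H2 := H.sub (((P a a' ha 2).mul (P b b' hb 1)).mul (P c c' hc 0))
  refine H2.congr_deriv ?_
  simp only [Pi.mul_apply]
  ring

end detderiv


/-- A horizontal conformal lift `r` of a Lagrangian surface in ℂP², with conformal
factor `v` and Lagrangian angle `β`, satisfies the Schrödinger equation
`r_xx + r_yy − i β_x r_x − i β_y r_y + 4 e^v r = 0`. -/
theorem schroedinger_equation_for_lagrangian_lift
    (r : ℝ → ℝ → Fin 3 → ℂ) (v β : ℝ → ℝ → ℝ)
    (hr : ContDiff ℝ (⊤ : ℕ∞) (Function.uncurry r))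
    (hv : ContDiff ℝ (⊤ : ℕ∞) (Function.uncurry v))
    (hβ : ContDiff ℝ (⊤ : ℕ∞) (Function.uncurry β))
    (h1 : ∀ x y, herm (r x y) (r x y) = 1)
    (h2 : ∀ x y, herm (pdx r x y) (r x y) = 0)
    (h3 : ∀ x y, herm (pdy r x y) (r x y) = 0)
    (h4 : ∀ x y, herm (pdx r x y) (pdy r x y) = 0)
    (h5 : ∀ x y, herm (pdx r x y) (pdx r x y) = 2 * Real.exp (v x y))
    (h6 : ∀ x y, herm (pdy r x y) (pdy r x y) = 2 * Real.exp (v x y))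
    (hx0 : ∀ x y, pdx r x y ≠ 0)
    (hy0 : ∀ x y, pdy r x y ≠ 0)
    (hangle : ∀ x y, Complex.exp (Complex.I * (β x y : ℂ)) =
      Matrix.det (Matrix.of ![r x y,
        ((hnorm (pdx r x y) : ℂ))⁻¹ • pdx r x y,
        ((hnorm (pdy r x y) : ℂ))⁻¹ • pdy r x y])) :
    ∀ x y, pdx (pdx r) x y + pdy (pdy r) x y
      - (Complex.I * Complex.ofReal (pdx β x y)) • pdx r x y
      - (Complex.I * Complex.ofReal (pdy β x y)) • pdy r x y
      + ((4 * Real.exp (v x y) : ℝ) : ℂ) • r x y = 0 := by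
  have hrx : ContDiff ℝ (⊤ : ℕ∞) (Function.uncurry (pdx r)) := contDiff_pdx hr
  have hry : ContDiff ℝ (⊤ : ℕ∞) (Function.uncurry (pdy r)) := contDiff_pdy hr
  -- commuting of mixed partials
  have comm : ∀ x y, pdy (pdx r) x y = pdx (pdy r) x y := fun x y => (pdx_pdy_comm hr x y).symm
  -- helpers for differentiating herm identities
  have DconstX : ∀ (a b : ℝ → ℝ → Fin 3 → ℂ), ContDiff ℝ (⊤ : ℕ∞) (Function.uncurry a) →
      ContDiff ℝ (⊤ : ℕ∞) (Function.uncurry b) → (∀ x y, herm (a x y) (b x y) = 0) →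
      ∀ x y, herm (pdx a x y) (b x y) + herm (a x y) (pdx b x y) = 0 := by
    intro a b ha hb h x y
    have hD := (hasDerivAt_pdx ha x y).herm' (hasDerivAt_pdx hb x y)
    have hconst : HasDerivAt (fun x' => herm (a x' y) (b x' y)) 0 x := by
      have he : (fun x' => herm (a x' y) (b x' y)) = fun _ => (0 : ℂ) :=
        funext fun x' => h x' y
      rw [he]; exact hasDerivAt_const x 0
    exact hD.unique hconst
  have DconstY : ∀ (a b : ℝ → ℝ → Fin 3 → ℂ), ContDiff ℝ (⊤ : ℕ∞) (Function.uncurry a) →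
      ContDiff ℝ (⊤ : ℕ∞) (Function.uncurry b) → (∀ x y, herm (a x y) (b x y) = 0) →
      ∀ x y, herm (pdy a x y) (b x y) + herm (a x y) (pdy b x y) = 0 := by
    intro a b ha hb h x y
    have hD := (hasDerivAt_pdy ha x y).herm' (hasDerivAt_pdy hb x y)
    have hconst : HasDerivAt (fun y' => herm (a x y') (b x y')) 0 y := by
      have he : (fun y' => herm (a x y') (b x y')) = fun _ => (0 : ℂ) :=
        funext fun y' => h x y'
      rw [he]; exact hasDerivAt_const y 0
    exact hD.unique hconst
  have DexpX : ∀ (a : ℝ → ℝ → Fin 3 → ℂ), ContDiff ℝ (⊤ : ℕ∞) (Function.uncurry a) →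
      (∀ x y, herm (a x y) (a x y) = 2 * Real.exp (v x y)) →
      ∀ x y, herm (pdx a x y) (a x y) + herm (a x y) (pdx a x y)
        = 2 * ((Real.exp (v x y) * pdx v x y : ℝ) : ℂ) := by
    intro a ha h x y
    have hD := (hasDerivAt_pdx ha x y).herm' (hasDerivAt_pdx ha x y)
    have hconst : HasDerivAt (fun x' => herm (a x' y) (a x' y))
        (2 * ((Real.exp (v x y) * pdx v x y : ℝ) : ℂ)) x := by
      have he : (fun x' => herm (a x' y) (a x' y))
          = fun x' => 2 * ((Real.exp (v x' y) : ℝ) : ℂ) :=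
        funext fun x' => h x' y
      rw [he]
      have hre : HasDerivAt (fun x' => Real.exp (v x' y))
          (Real.exp (v x y) * pdx v x y) x := (hasDerivAt_pdx hv x y).exp
      have hc : HasDerivAt (fun x' => ((Real.exp (v x' y) : ℝ) : ℂ))
          ((Real.exp (v x y) * pdx v x y : ℝ) : ℂ) x := by
        exact Complex.ofRealCLM.hasFDerivAt.comp_hasDerivAt x hre
      exact hc.const_mul 2
    exact hD.unique hconst
  have DexpY : ∀ (a : ℝ → ℝ → Fin 3 → ℂ), ContDiff ℝ (⊤ : ℕ∞) (Function.uncurry a) →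
      (∀ x y, herm (a x y) (a x y) = 2 * Real.exp (v x y)) →
      ∀ x y, herm (pdy a x y) (a x y) + herm (a x y) (pdy a x y)
        = 2 * ((Real.exp (v x y) * pdy v x y : ℝ) : ℂ) := by
    intro a ha h x y
    have hD := (hasDerivAt_pdy ha x y).herm' (hasDerivAt_pdy ha x y)
    have hconst : HasDerivAt (fun y' => herm (a x y') (a x y'))
        (2 * ((Real.exp (v x y) * pdy v x y : ℝ) : ℂ)) y := by
      have he : (fun y' => herm (a x y') (a x y'))
          = fun y' => 2 * ((Real.exp (v x y') : ℝ) : ℂ) :=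
        funext fun y' => h x y'
      rw [he]
      have hre : HasDerivAt (fun y' => Real.exp (v x y'))
          (Real.exp (v x y) * pdy v x y) y := (hasDerivAt_pdy hv x y).exp
      have hc : HasDerivAt (fun y' => ((Real.exp (v x y') : ℝ) : ℂ))
          ((Real.exp (v x y) * pdy v x y : ℝ) : ℂ) y := by
        exact Complex.ofRealCLM.hasFDerivAt.comp_hasDerivAt y hre
      exact hc.const_mul 2
    exact hD.unique hconst
  -- differentiated identities
  have D2x := DconstX (pdx r) r hrx hr h2
  have D3y := DconstY (pdy r) r hry hr h3
  have D4x := DconstX (pdx r) (pdy r) hrx hry h4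
  have D4y := DconstY (pdx r) (pdy r) hrx hry h4
  have D5y := DexpY (pdx r) hrx h5
  have D6x := DexpX (pdy r) hry h6
  -- determinant of the unnormalized frame
  have hdetM : ∀ x y, (Matrix.of ![r x y, pdx r x y, pdy r x y]).det
      = 2 * Real.exp (v x y) * Complex.exp (Complex.I * (β x y : ℂ)) := by
    intro x y
    have hnx : hnorm (pdx r x y) = Real.sqrt (2 * Real.exp (v x y)) := by
      unfold hnorm
      rw [h5 x y]
      generalize Real.exp (v x y) = e
      norm_num [Complex.mul_re]
    have hny : hnorm (pdy r x y) = Real.sqrt (2 * Real.exp (v x y)) := by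
      unfold hnorm
      rw [h6 x y]
      generalize Real.exp (v x y) = e
      norm_num [Complex.mul_re]
    have hpos : (0 : ℝ) < 2 * Real.exp (v x y) := by positivity
    have hprod : ((hnorm (pdx r x y) : ℂ)) * ((hnorm (pdy r x y) : ℂ))
        = 2 * Real.exp (v x y) := by
      rw [hnx, hny]
      rw [← Complex.ofReal_mul, Real.mul_self_sqrt hpos.le]
      push_cast
      ring
    have hc1 : ((hnorm (pdx r x y) : ℂ)) ≠ 0 := by
      rw [hnx]
      simp only [ne_eq, Complex.ofReal_eq_zero]
      positivity
    have hc2 : ((hnorm (pdy r x y) : ℂ)) ≠ 0 := by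
      rw [hny]
      simp only [ne_eq, Complex.ofReal_eq_zero]
      positivity
    have h := hangle x y
    rw [show (Matrix.of ![r x y,
        ((hnorm (pdx r x y) : ℂ))⁻¹ • pdx r x y,
        ((hnorm (pdy r x y) : ℂ))⁻¹ • pdy r x y]).det
      = ((hnorm (pdx r x y) : ℂ))⁻¹ * ((hnorm (pdy r x y) : ℂ))⁻¹
        * (Matrix.of ![r x y, pdx r x y, pdy r x y]).det by
        simp only [det_rows, Pi.smul_apply, smul_eq_mul]
        ring] at h
    have hd : (Matrix.of ![r x y, pdx r x y, pdy r x y]).det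
        = (((hnorm (pdx r x y) : ℂ)) * ((hnorm (pdy r x y) : ℂ)))
          * Complex.exp (Complex.I * (β x y : ℂ)) := by
      rw [h]
      field_simp
    rw [hd, hprod]
  have hexp_ne : ∀ x y, ((2 * Real.exp (v x y) : ℝ) : ℂ) ≠ 0 := by
    intro x y
    simp only [ne_eq, Complex.ofReal_eq_zero]
    positivity
  have hcexpS : ∀ x y, Complex.exp (Complex.I * (β x y : ℂ))
      * starRingEnd ℂ ((Matrix.of ![r x y, pdx r x y, pdy r x y]).det)
      = 2 * Real.exp (v x y) := by
    intro x y
    rw [hdetM x y]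
    have hst : starRingEnd ℂ (2 * ((Real.exp (v x y) : ℝ) : ℂ)
        * Complex.exp (Complex.I * (β x y : ℂ)))
        = 2 * ((Real.exp (v x y) : ℝ) : ℂ) * Complex.exp (-(Complex.I * (β x y : ℂ)))
        := by
      rw [_root_.map_mul, _root_.map_mul, ← Complex.exp_conj]
      simp only [_root_.map_mul, Complex.conj_I, Complex.conj_ofReal, map_ofNat, neg_mul]
    rw [hst, show Complex.exp (Complex.I * (β x y : ℂ))
        * (2 * ((Real.exp (v x y) : ℝ) : ℂ) * Complex.exp (-(Complex.I * (β x y : ℂ))))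
        = 2 * ((Real.exp (v x y) : ℝ) : ℂ)
          * (Complex.exp (Complex.I * (β x y : ℂ))
            * Complex.exp (-(Complex.I * (β x y : ℂ)))) by ring,
      ← Complex.exp_add]
    simp
  
  have detM_ne : ∀ x y, (Matrix.of ![r x y, pdx r x y, pdy r x y]).det ≠ 0 := by
    intro x y
    rw [hdetM x y]
    exact mul_ne_zero (mul_ne_zero two_ne_zero
      (Complex.ofReal_ne_zero.mpr (Real.exp_ne_zero _))) (Complex.exp_ne_zero _)
  -- conjugate zero identities
  have z1 : ∀ x y, herm (r x y) (pdx r x y) = 0 := by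
    intro x y; rw [herm_conj, h2, map_zero]
  have z2 : ∀ x y, herm (r x y) (pdy r x y) = 0 := by
    intro x y; rw [herm_conj, h3, map_zero]
  have z3 : ∀ x y, herm (pdy r x y) (pdx r x y) = 0 := by
    intro x y; rw [herm_conj, h4, map_zero]
  -- key determinant-derivative identity in x
  have keyX : ∀ x y, herm (pdx (pdx r) x y) (pdx r x y) + herm (pdx (pdy r) x y) (pdy r x y)
      = 2 * ((Real.exp (v x y) : ℝ) : ℂ) * (((pdx v x y : ℝ) : ℂ) + Complex.I * ((pdx β x y : ℝ) : ℂ)) := by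
    intro x y
    have hL := hasDerivAt_det_rows (hasDerivAt_pdx hr x y) (hasDerivAt_pdx hrx x y)
      (hasDerivAt_pdx hry x y)
    rw [show (fun x' => (Matrix.of ![r x' y, pdx r x' y, pdy r x' y]).det)
        = fun x' => 2 * ((Real.exp (v x' y) : ℝ) : ℂ)
            * Complex.exp (Complex.I * ((β x' y : ℝ) : ℂ)) from
      funext fun x' => hdetM x' y] at hL
    have hb : HasDerivAt (fun x' => ((β x' y : ℝ) : ℂ)) (((pdx β x y : ℝ) : ℂ)) x :=
      Complex.ofRealCLM.hasFDerivAt.comp_hasDerivAt x (hasDerivAt_pdx hβ x y)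
    have hIb : HasDerivAt (fun x' => Complex.I * ((β x' y : ℝ) : ℂ))
        (Complex.I * ((pdx β x y : ℝ) : ℂ)) x := hb.const_mul Complex.I
    have hcexp := hIb.cexp
    have hre : HasDerivAt (fun x' => ((Real.exp (v x' y) : ℝ) : ℂ))
        (((Real.exp (v x y) * pdx v x y : ℝ) : ℂ)) x :=
      Complex.ofRealCLM.hasFDerivAt.comp_hasDerivAt x ((hasDerivAt_pdx hv x y).exp)
    have hR := (hre.const_mul (2 : ℂ)).mul hcexp
    have heq := hR.unique hL
    -- gram identities
    have hz : (Matrix.of ![pdx r x y, pdx r x y, pdy r x y]).det = 0 := by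
      rw [det_rows]; ring
    have gA : (Matrix.of ![r x y, pdx (pdx r) x y, pdy r x y]).det
        * starRingEnd ℂ ((Matrix.of ![r x y, pdx r x y, pdy r x y]).det)
        = 2 * ((Real.exp (v x y) : ℝ) : ℂ) * herm (pdx (pdx r) x y) (pdx r x y) := by
      rw [det_gram, h1, z1, z2, h3, z3, h6]; ring
    have gB : (Matrix.of ![r x y, pdx r x y, pdx (pdy r) x y]).det
        * starRingEnd ℂ ((Matrix.of ![r x y, pdx r x y, pdy r x y]).det)
        = 2 * ((Real.exp (v x y) : ℝ) : ℂ) * herm (pdx (pdy r) x y) (pdy r x y) := by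
      rw [det_gram, h1, z1, z2, h2, h5, h4]; ring
    have h2e : (2 * ((Real.exp (v x y) : ℝ) : ℂ)) ≠ 0 :=
      mul_ne_zero two_ne_zero (Complex.ofReal_ne_zero.mpr (Real.exp_ne_zero _))
    apply mul_left_cancel₀ h2e
    calc 2 * ((Real.exp (v x y) : ℝ) : ℂ)
          * (herm (pdx (pdx r) x y) (pdx r x y) + herm (pdx (pdy r) x y) (pdy r x y))
        = (Matrix.of ![r x y, pdx (pdx r) x y, pdy r x y]).det
            * starRingEnd ℂ ((Matrix.of ![r x y, pdx r x y, pdy r x y]).det)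
          + (Matrix.of ![r x y, pdx r x y, pdx (pdy r) x y]).det
            * starRingEnd ℂ ((Matrix.of ![r x y, pdx r x y, pdy r x y]).det) := by
          rw [gA, gB]; ring
      _ = ((Matrix.of ![pdx r x y, pdx r x y, pdy r x y]).det
            + (Matrix.of ![r x y, pdx (pdx r) x y, pdy r x y]).det
            + (Matrix.of ![r x y, pdx r x y, pdx (pdy r) x y]).det)
          * starRingEnd ℂ ((Matrix.of ![r x y, pdx r x y, pdy r x y]).det) := by
          rw [hz]; ring
      _ = (2 * ((Real.exp (v x y) * pdx v x y : ℝ) : ℂ)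
            * Complex.exp (Complex.I * ((β x y : ℝ) : ℂ))
          + 2 * ((Real.exp (v x y) : ℝ) : ℂ)
            * (Complex.exp (Complex.I * ((β x y : ℝ) : ℂ))
              * (Complex.I * ((pdx β x y : ℝ) : ℂ))))
          * starRingEnd ℂ ((Matrix.of ![r x y, pdx r x y, pdy r x y]).det) := by
          rw [← heq]
      _ = (2 * ((Real.exp (v x y) * pdx v x y : ℝ) : ℂ)
            + 2 * ((Real.exp (v x y) : ℝ) : ℂ) * (Complex.I * ((pdx β x y : ℝ) : ℂ)))
          * (Complex.exp (Complex.I * ((β x y : ℝ) : ℂ))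
            * starRingEnd ℂ ((Matrix.of ![r x y, pdx r x y, pdy r x y]).det)) := by
          ring
      _ = (2 * ((Real.exp (v x y) * pdx v x y : ℝ) : ℂ)
            + 2 * ((Real.exp (v x y) : ℝ) : ℂ) * (Complex.I * ((pdx β x y : ℝ) : ℂ)))
          * (2 * Real.exp (v x y)) := by
          rw [hcexpS x y]
      _ = 2 * ((Real.exp (v x y) : ℝ) : ℂ)
          * (2 * ((Real.exp (v x y) : ℝ) : ℂ)
            * (((pdx v x y : ℝ) : ℂ) + Complex.I * ((pdx β x y : ℝ) : ℂ))) := by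
          push_cast; ring
  -- key determinant-derivative identity in y
  have keyY : ∀ x y, herm (pdx (pdy r) x y) (pdx r x y) + herm (pdy (pdy r) x y) (pdy r x y)
      = 2 * ((Real.exp (v x y) : ℝ) : ℂ) * (((pdy v x y : ℝ) : ℂ) + Complex.I * ((pdy β x y : ℝ) : ℂ)) := by
    intro x y
    have hL := hasDerivAt_det_rows (hasDerivAt_pdy hr x y) (hasDerivAt_pdy hrx x y)
      (hasDerivAt_pdy hry x y)
    rw [comm x y] at hL
    rw [show (fun y' => (Matrix.of ![r x y', pdx r x y', pdy r x y']).det)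
        = fun y' => 2 * ((Real.exp (v x y') : ℝ) : ℂ)
            * Complex.exp (Complex.I * ((β x y' : ℝ) : ℂ)) from
      funext fun y' => hdetM x y'] at hL
    have hb : HasDerivAt (fun y' => ((β x y' : ℝ) : ℂ)) (((pdy β x y : ℝ) : ℂ)) y :=
      Complex.ofRealCLM.hasFDerivAt.comp_hasDerivAt y (hasDerivAt_pdy hβ x y)
    have hIb : HasDerivAt (fun y' => Complex.I * ((β x y' : ℝ) : ℂ))
        (Complex.I * ((pdy β x y : ℝ) : ℂ)) y := hb.const_mul Complex.I
    have hcexp := hIb.cexp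
    have hre : HasDerivAt (fun y' => ((Real.exp (v x y') : ℝ) : ℂ))
        (((Real.exp (v x y) * pdy v x y : ℝ) : ℂ)) y :=
      Complex.ofRealCLM.hasFDerivAt.comp_hasDerivAt y ((hasDerivAt_pdy hv x y).exp)
    have hR := (hre.const_mul (2 : ℂ)).mul hcexp
    have heq := hR.unique hL
    have hz : (Matrix.of ![pdy r x y, pdx r x y, pdy r x y]).det = 0 := by
      rw [det_rows]; ring
    have gC : (Matrix.of ![r x y, pdx (pdy r) x y, pdy r x y]).det
        * starRingEnd ℂ ((Matrix.of ![r x y, pdx r x y, pdy r x y]).det)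
        = 2 * ((Real.exp (v x y) : ℝ) : ℂ) * herm (pdx (pdy r) x y) (pdx r x y) := by
      rw [det_gram, h1, z1, z2, h3, z3, h6]; ring
    have gD : (Matrix.of ![r x y, pdx r x y, pdy (pdy r) x y]).det
        * starRingEnd ℂ ((Matrix.of ![r x y, pdx r x y, pdy r x y]).det)
        = 2 * ((Real.exp (v x y) : ℝ) : ℂ) * herm (pdy (pdy r) x y) (pdy r x y) := by
      rw [det_gram, h1, z1, z2, h2, h5, h4]; ring
    have h2e : (2 * ((Real.exp (v x y) : ℝ) : ℂ)) ≠ 0 :=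
      mul_ne_zero two_ne_zero (Complex.ofReal_ne_zero.mpr (Real.exp_ne_zero _))
    apply mul_left_cancel₀ h2e
    calc 2 * ((Real.exp (v x y) : ℝ) : ℂ)
          * (herm (pdx (pdy r) x y) (pdx r x y) + herm (pdy (pdy r) x y) (pdy r x y))
        = (Matrix.of ![r x y, pdx (pdy r) x y, pdy r x y]).det
            * starRingEnd ℂ ((Matrix.of ![r x y, pdx r x y, pdy r x y]).det)
          + (Matrix.of ![r x y, pdx r x y, pdy (pdy r) x y]).det
            * starRingEnd ℂ ((Matrix.of ![r x y, pdx r x y, pdy r x y]).det) := by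
          rw [gC, gD]; ring
      _ = ((Matrix.of ![pdy r x y, pdx r x y, pdy r x y]).det
            + (Matrix.of ![r x y, pdx (pdy r) x y, pdy r x y]).det
            + (Matrix.of ![r x y, pdx r x y, pdy (pdy r) x y]).det)
          * starRingEnd ℂ ((Matrix.of ![r x y, pdx r x y, pdy r x y]).det) := by
          rw [hz]; ring
      _ = (2 * ((Real.exp (v x y) * pdy v x y : ℝ) : ℂ)
            * Complex.exp (Complex.I * ((β x y : ℝ) : ℂ))
          + 2 * ((Real.exp (v x y) : ℝ) : ℂ)
            * (Complex.exp (Complex.I * ((β x y : ℝ) : ℂ))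
              * (Complex.I * ((pdy β x y : ℝ) : ℂ))))
          * starRingEnd ℂ ((Matrix.of ![r x y, pdx r x y, pdy r x y]).det) := by
          rw [← heq]
      _ = (2 * ((Real.exp (v x y) * pdy v x y : ℝ) : ℂ)
            + 2 * ((Real.exp (v x y) : ℝ) : ℂ) * (Complex.I * ((pdy β x y : ℝ) : ℂ)))
          * (Complex.exp (Complex.I * ((β x y : ℝ) : ℂ))
            * starRingEnd ℂ ((Matrix.of ![r x y, pdx r x y, pdy r x y]).det)) := by
          ring
      _ = (2 * ((Real.exp (v x y) * pdy v x y : ℝ) : ℂ)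
            + 2 * ((Real.exp (v x y) : ℝ) : ℂ) * (Complex.I * ((pdy β x y : ℝ) : ℂ)))
          * (2 * Real.exp (v x y)) := by
          rw [hcexpS x y]
      _ = 2 * ((Real.exp (v x y) : ℝ) : ℂ)
          * (2 * ((Real.exp (v x y) : ℝ) : ℂ)
            * (((pdy v x y : ℝ) : ℂ) + Complex.I * ((pdy β x y : ℝ) : ℂ))) := by
          push_cast; ring
  -- final assembly
  intro x y
  set wv : Fin 3 → ℂ := pdx (pdx r) x y + pdy (pdy r) x y
      - (Complex.I * Complex.ofReal (pdx β x y)) • pdx r x y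
      - (Complex.I * Complex.ofReal (pdy β x y)) • pdy r x y
      + ((4 * Real.exp (v x y) : ℝ) : ℂ) • r x y with hwv
  show wv = 0
  have cw_r : herm wv (r x y) = 0 := by
    rw [hwv]
    simp only [herm_add_left, herm_sub_left, herm_smul_left]
    simp only [Complex.ofReal_mul, Complex.ofReal_ofNat]
    linear_combination (D2x x y) + (D3y x y) - (h5 x y) - (h6 x y)
      - (Complex.I * ((pdx β x y : ℝ) : ℂ)) * (h2 x y)
      - (Complex.I * ((pdy β x y : ℝ) : ℂ)) * (h3 x y)
      + (4 * ((Real.exp (v x y) : ℝ) : ℂ)) * (h1 x y)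
  have hD4y := D4y x y
  rw [comm x y] at hD4y
  have hc4 : herm (pdy r x y) (pdx (pdy r) x y) + herm (pdy (pdy r) x y) (pdx r x y) = 0 := by
    have hco := congrArg (starRingEnd ℂ) hD4y
    rw [map_add, ← herm_conj, ← herm_conj, map_zero] at hco
    exact hco
  have cw_rx : herm wv (pdx r x y) = 0 := by
    rw [hwv]
    simp only [herm_add_left, herm_sub_left, herm_smul_left]
    simp only [Complex.ofReal_mul, Complex.ofReal_ofNat]
    have hD6x := D6x x y
    rw [Complex.ofReal_mul] at hD6x
    linear_combination (keyX x y) - hD6x + hc4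
      - (Complex.I * ((pdx β x y : ℝ) : ℂ)) * (h5 x y)
      - (Complex.I * ((pdy β x y : ℝ) : ℂ)) * (z3 x y)
      + (4 * ((Real.exp (v x y) : ℝ) : ℂ)) * (z1 x y)
  have hD5y := D5y x y
  rw [comm x y] at hD5y
  have cw_ry : herm wv (pdy r x y) = 0 := by
    rw [hwv]
    simp only [herm_add_left, herm_sub_left, herm_smul_left]
    simp only [Complex.ofReal_mul, Complex.ofReal_ofNat]
    rw [Complex.ofReal_mul] at hD5y
    linear_combination (keyY x y) + (D4x x y) - hD5y
      - (Complex.I * ((pdx β x y : ℝ) : ℂ)) * (h4 x y)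
      - (Complex.I * ((pdy β x y : ℝ) : ℂ)) * (h6 x y)
      + (4 * ((Real.exp (v x y) : ℝ) : ℂ)) * (z2 x y)
  -- conclude with invertibility of the frame matrix
  set N : Matrix (Fin 3) (Fin 3) ℂ :=
    (Matrix.of ![r x y, pdx r x y, pdy r x y]).map (starRingEnd ℂ) with hN
  have hNv : N.mulVec wv = 0 := by
    funext j
    have hj : N.mulVec wv j = herm wv (Matrix.of ![r x y, pdx r x y, pdy r x y] j) := by
      simp [hN, Matrix.mulVec, dotProduct, Fin.sum_univ_three, herm,
        Matrix.map_apply, mul_comm]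
    fin_cases j
    · rw [hj]
      exact cw_r
    · rw [hj]
      exact cw_rx
    · rw [hj]
      exact cw_ry
  have hNdet : N.det ≠ 0 := by
    have hdN : N.det = starRingEnd ℂ ((Matrix.of ![r x y, pdx r x y, pdy r x y]).det) := by
      rw [hN, RingHom.map_det, RingHom.mapMatrix_apply]
    rw [hdN]
    intro hcon
    apply detM_ne x y
    have := congrArg (starRingEnd ℂ) hcon
    simpa using this
  have hfin : N⁻¹.mulVec (N.mulVec wv) = wv := by
    rw [Matrix.mulVec_mulVec, Matrix.nonsing_inv_mul N (isUnit_iff_ne_zero.mpr hNdet),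
      Matrix.one_mulVec]
  rw [hNv, Matrix.mulVec_zero] at hfin
  exact hfin.symm
end

section
/- Let r₁, r₂, r₃ > 0 with r₁² + r₂² + r₃² = 1, let a₁ = a₂ = −r₁²/(r₂²+r₃²), b₁ = r₁r₃/(r₂(r₂²+r₃²)), b₂ = −r₁r₂/(r₃(r₂²+r₃²)), and let r(x,y) = (r₁ e^{2πi x}, r₂ e^{2πi(a₁x+b₁y)}, r₃ e^{2πi(a₂x+b₂y)}). Set e₁ = (r₂²+r₃², 0) and e₂ = (r₃², r₂r₃/r₁) in ℝ². Then for all (x,y): r((x,y) + e₁) = e^{−2πi r₁²} · r(x,y) and r((x,y) + e₂) = e^{2πi r₃²} · r(x,y). In particular the composition of r with the Hopf projection S⁵ → ℂP² is doubly periodic with lattice of periods Λ = ℤe₁ + ℤe₂. -/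
open Complex Real

/-!
Each coordinate of `r` is a plane wave `c e^{2πi ℓ(x,y)}` with `ℓ` linear, so translating by `e`
multiplies it by `e^{2πi ℓ(e)}`. The vector `r` is therefore a Bloch function for `e` with
multiplier `e^{2πi p}` as soon as all three numbers `ℓ_k(e)` agree with `p` modulo `ℤ`. For `e₁` they
are `r₂² + r₃² = 1 - r₁²` and twice `-r₁²`; for `e₂` they are `r₃²`, `r₃²` and `r₃² - 1`.
-/

theorem exp_two_pi_mul_I_add_of_eq_add_int {t s p : ℝ} {m : ℤ} (h : s = p + m) :
    Complex.exp (2 * π * ((t + s : ℝ) : ℂ) * I) =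
      Complex.exp (2 * π * p * I) * Complex.exp (2 * π * t * I) := by
  rw [h, show (2 * π * ((t + (p + m) : ℝ) : ℂ) * I) =
      2 * π * p * I + 2 * π * t * I + m * (2 * π * I) by push_cast; ring,
    Complex.exp_add, Complex.exp_add, exp_int_mul_two_pi_mul_I, mul_one]

noncomputable def planeWave {ι : Type*} (c α β : ι → ℝ) (x y : ℝ) : ι → ℂ :=
  fun k => c k * Complex.exp (2 * π * ((α k * x + β k * y : ℝ) : ℂ) * I)

theorem planeWave_add {ι : Type*} (c α β : ι → ℝ) {u v p : ℝ}
    (h : ∀ k, ∃ m : ℤ, α k * u + β k * v = p + m) (x y : ℝ) :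
    planeWave c α β (x + u) (y + v) = Complex.exp (2 * π * p * I) • planeWave c α β x y := by
  funext k
  obtain ⟨m, hm⟩ := h k
  have hsplit : α k * (x + u) + β k * (y + v) = (α k * x + β k * y) + (α k * u + β k * v) := by
    ring
  simp only [planeWave, Pi.smul_apply, smul_eq_mul, hsplit,
    exp_two_pi_mul_I_add_of_eq_add_int hm]
  ring

section HomogeneousTorus

variable {r1 r2 r3 : ℝ}

theorem homogeneousTorus_phase_b1_e2 (h1 : r1 ≠ 0) (h2 : r2 ≠ 0) (hq : r2 ^ 2 + r3 ^ 2 ≠ 0)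
    (hsum : r1 ^ 2 + r2 ^ 2 + r3 ^ 2 = 1) :
    -r1 ^ 2 / (r2 ^ 2 + r3 ^ 2) * r3 ^ 2 + r1 * r3 / (r2 * (r2 ^ 2 + r3 ^ 2)) * (r2 * r3 / r1)
      = r3 ^ 2 := by
  field_simp
  linear_combination (-r3 ^ 2) * hsum

theorem homogeneousTorus_phase_b2_e2 (h1 : r1 ≠ 0) (h3 : r3 ≠ 0) (hq : r2 ^ 2 + r3 ^ 2 ≠ 0)
    (hsum : r1 ^ 2 + r2 ^ 2 + r3 ^ 2 = 1) :
    -r1 ^ 2 / (r2 ^ 2 + r3 ^ 2) * r3 ^ 2 + -(r1 * r2) / (r3 * (r2 ^ 2 + r3 ^ 2)) * (r2 * r3 / r1)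
      = r3 ^ 2 - 1 := by
  field_simp
  linear_combination (-r3 ^ 2) * hsum

end HomogeneousTorus

/-- The horizontal lift `r` of the homogeneous torus `Σ_{r₁,r₂,r₃}` is a Bloch
function: translating by `e₁ = (r₂²+r₃², 0)` multiplies `r` by `e^{−2πi r₁²}`, and
translating by `e₂ = (r₃², r₂r₃/r₁)` multiplies `r` by `e^{2πi r₃²}`. Hence the
composition with the Hopf projection is doubly periodic with lattice `ℤe₁ + ℤe₂`. -/
theorem homogeneous_torus_lift_is_bloch
    (r1 r2 r3 : ℝ) (h1 : 0 < r1) (h2 : 0 < r2) (h3 : 0 < r3)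
    (hsum : r1^2 + r2^2 + r3^2 = 1)
    (a1 a2 b1 b2 : ℝ)
    (ha1 : a1 = -r1^2 / (r2^2 + r3^2))
    (ha2 : a2 = -r1^2 / (r2^2 + r3^2))
    (hb1 : b1 = r1 * r3 / (r2 * (r2^2 + r3^2)))
    (hb2 : b2 = -(r1 * r2) / (r3 * (r2^2 + r3^2)))
    (r : ℝ → ℝ → Fin 3 → ℂ)
    (hr : ∀ x y, r x y =
      ![(r1 : ℂ) * Complex.exp (2 * Real.pi * x * Complex.I),
        (r2 : ℂ) * Complex.exp (2 * Real.pi * (a1 * x + b1 * y) * Complex.I),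
        (r3 : ℂ) * Complex.exp (2 * Real.pi * (a2 * x + b2 * y) * Complex.I)])
    (e1 e2 : ℝ × ℝ)
    (he1 : e1 = (r2^2 + r3^2, 0))
    (he2 : e2 = (r3^2, r2 * r3 / r1)) :
    ∀ x y,
      r (x + e1.1) (y + e1.2) =
        Complex.exp (-(2 * Real.pi * r1^2) * Complex.I) • r x y ∧
      r (x + e2.1) (y + e2.2) =
        Complex.exp ((2 * Real.pi * r3^2) * Complex.I) • r x y := by
  have hq : r2 ^ 2 + r3 ^ 2 ≠ 0 := by positivity
  have hr_wave : ∀ x y, r x y = planeWave ![r1, r2, r3] ![1, a1, a2] ![0, b1, b2] x y := by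
    intro x y
    funext k
    fin_cases k <;> simp [hr, planeWave]
  subst ha1 ha2 hb1 hb2 he1 he2
  intro x y
  simp only [hr_wave]
  constructor
  · convert planeWave_add _ _ _ (p := -r1 ^ 2) (fun k => ?_) x y using 3
    · push_cast; ring
    fin_cases k
    · exact ⟨1, by push_cast; linarith⟩
    · exact ⟨0, by simpa using div_mul_cancel₀ (-r1 ^ 2) hq⟩
    · exact ⟨0, by simpa using div_mul_cancel₀ (-r1 ^ 2) hq⟩
  · convert planeWave_add _ _ _ (p := r3 ^ 2) (fun k => ?_) x y using 3
    · push_cast; ring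
    fin_cases k
    · exact ⟨0, by simp⟩
    · exact ⟨0, by simpa using homogeneousTorus_phase_b1_e2 h1.ne' h2.ne' hq hsum⟩
    · exact ⟨-1, by
        simpa [sub_eq_add_neg] using homogeneousTorus_phase_b2_e2 h1.ne' h3.ne' hq hsum⟩
end

section
/- Let r₁, r₂, r₃ > 0 with r₁² + r₂² + r₃² = 1. Set V = 8π²r₁²/(r₂²+r₃²) + (1/4)(β_x² + β_y²), where β_x = 2π(1−3r₁²)/(r₂²+r₃²) and β_y = −2π r₁(r₂²−r₃²)/(r₂r₃(r₂²+r₃²)) are constants. Then V = π²(1−r₂²)(r₁²+r₂²)/(r₂²r₃²), and the energy of the homogeneous torus, E(Σ_{r₁,r₂,r₃}) = (1/2)·V·(r₂²+r₃²)·r₂r₃/r₁ (one half the potential times the area of the fundamental domain spanned by e₁ = (r₂²+r₃²,0) and e₂ = (r₃², r₂r₃/r₁)), equals π²(1−r₁²)(1−r₂²)(1−r₃²)/(2r₁r₂r₃). -/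
open Real

/-! Both claims are rational identities in `r₁, r₂, r₃` modulo the relation
`r₁² + r₂² + r₃² = 1`. After clearing denominators the potential becomes a polynomial identity
once `r₁²` is eliminated, and the energy collapses once `r₂² + r₃²` and `r₁² + r₂²` are written
as `1 − r₁²` and `1 − r₃²`. -/

section HomogeneousTorus

variable {r1 r2 r3 : ℝ}

theorem homogeneousTorus_potential_eq (hr2 : r2 ≠ 0) (hr3 : r3 ≠ 0)
    (hsum : r1^2 + r2^2 + r3^2 = 1) :
    8 * π^2 * r1^2 / (r2^2 + r3^2) +
        (1/4) * ((2 * π * (1 - 3 * r1^2) / (r2^2 + r3^2))^2 +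
          (-(2 * π * r1 * (r2^2 - r3^2)) / (r2 * r3 * (r2^2 + r3^2)))^2) =
      π^2 * (1 - r2^2) * (r1^2 + r2^2) / (r2^2 * r3^2) := by
  have hs : r2^2 + r3^2 ≠ 0 := by positivity
  field_simp
  rw [show r1^2 = 1 - r2^2 - r3^2 by linarith]
  ring

theorem homogeneousTorus_energy_eq (hr1 : r1 ≠ 0) (hr2 : r2 ≠ 0) (hr3 : r3 ≠ 0)
    (hsum : r1^2 + r2^2 + r3^2 = 1) :
    (1/2) * (π^2 * (1 - r2^2) * (r1^2 + r2^2) / (r2^2 * r3^2)) *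
        ((r2^2 + r3^2) * (r2 * r3 / r1)) =
      π^2 * (1 - r1^2) * (1 - r2^2) * (1 - r3^2) / (2 * r1 * r2 * r3) := by
  rw [show r1^2 + r2^2 = 1 - r3^2 by linarith, show r2^2 + r3^2 = 1 - r1^2 by linarith]
  field_simp

end HomogeneousTorus

/-- The constant Schrödinger potential `V = 8π²r₁²/(r₂²+r₃²) + (1/4)(β_x²+β_y²)` of the
homogeneous torus `Σ_{r₁,r₂,r₃}` equals `π²(1−r₂²)(r₁²+r₂²)/(r₂²r₃²)`, and the energy
`E = (1/2)·V·(area of the fundamental domain)` equals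
`π²(1−r₁²)(1−r₂²)(1−r₃²)/(2r₁r₂r₃)`. -/
theorem energy_of_homogeneous_torus
    (r1 r2 r3 : ℝ) (h1 : 0 < r1) (h2 : 0 < r2) (h3 : 0 < r3)
    (hsum : r1^2 + r2^2 + r3^2 = 1)
    (βx βy V : ℝ)
    (hβx : βx = 2 * π * (1 - 3 * r1^2) / (r2^2 + r3^2))
    (hβy : βy = -(2 * π * r1 * (r2^2 - r3^2)) / (r2 * r3 * (r2^2 + r3^2)))
    (hV : V = 8 * π^2 * r1^2 / (r2^2 + r3^2) + (1/4) * (βx^2 + βy^2)) :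
    V = π^2 * (1 - r2^2) * (r1^2 + r2^2) / (r2^2 * r3^2) ∧
    (1/2) * V * ((r2^2 + r3^2) * (r2 * r3 / r1)) =
      π^2 * (1 - r1^2) * (1 - r2^2) * (1 - r3^2) / (2 * r1 * r2 * r3) := by
  have hpotential : V = π^2 * (1 - r2^2) * (r1^2 + r2^2) / (r2^2 * r3^2) := by
    rw [hV, hβx, hβy]
    exact homogeneousTorus_potential_eq h2.ne' h3.ne' hsum
  refine ⟨hpotential, ?_⟩
  rw [hpotential]
  exact homogeneousTorus_energy_eq h1.ne' h2.ne' h3.ne' hsum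
end

section
/- For all real numbers r₁, r₂, r₃ > 0 with r₁² + r₂² + r₃² = 1, one has π²(1−r₁²)(1−r₂²)(1−r₃²)/(2r₁r₂r₃) ≥ 4π²/(3√3), with equality if and only if r₁ = r₂ = r₃ = 1/√3. In other words, among Lagrangian homogeneous tori in ℂP², the Clifford torus attains the minimum of the energy functional, and E(Σ_Cl) = 4π²/(3√3). -/
/-!
Put `x = r₁², y = r₂², z = r₃²`, so that `x + y + z = 1` and `1 - r₁² = y + z`, etc.
The energy bound then says `27 ((x+y)(y+z)(z+x))² ≥ 64 xyz (x+y+z)³`, which follows from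
two classical symmetric inequalities:
`9 (x+y)(y+z)(z+x) ≥ 8 (x+y+z)(xy+yz+zx)`, whose defect is `x(y-z)² + y(z-x)² + z(x-y)²`,
and `(xy+yz+zx)² ≥ 3xyz(x+y+z)`. The first one is strict unless `x = y = z`, which gives
the equality case.
-/

open Real

section SymmetricInequalities

variable {x y z : ℝ}

lemma nine_mul_prod_add_sub_eight_mul_sum_mul (x y z : ℝ) :
    9 * ((x + y) * (y + z) * (z + x)) - 8 * ((x + y + z) * (x * y + y * z + z * x)) =
      x * (y - z) ^ 2 + y * (z - x) ^ 2 + z * (x - y) ^ 2 := by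
  ring

lemma eight_mul_sum_mul_le_nine_mul_prod_add (hx : 0 ≤ x) (hy : 0 ≤ y) (hz : 0 ≤ z) :
    8 * ((x + y + z) * (x * y + y * z + z * x)) ≤ 9 * ((x + y) * (y + z) * (z + x)) := by
  have h := nine_mul_prod_add_sub_eight_mul_sum_mul x y z
  have : 0 ≤ x * (y - z) ^ 2 + y * (z - x) ^ 2 + z * (x - y) ^ 2 := by positivity
  linarith

lemma eq_and_eq_of_nine_mul_prod_add_eq (hx : 0 < x) (hy : 0 < y) (hz : 0 < z)
    (h : 9 * ((x + y) * (y + z) * (z + x)) = 8 * ((x + y + z) * (x * y + y * z + z * x))) :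
    x = y ∧ y = z := by
  have hsum := nine_mul_prod_add_sub_eight_mul_sum_mul x y z
  rw [h, sub_self] at hsum
  have hyz : x * (y - z) ^ 2 = 0 := by
    nlinarith [sq_nonneg (y - z), sq_nonneg (z - x), sq_nonneg (x - y)]
  have hxy : z * (x - y) ^ 2 = 0 := by
    nlinarith [sq_nonneg (y - z), sq_nonneg (z - x), sq_nonneg (x - y)]
  rw [mul_eq_zero, or_iff_right hx.ne', sq_eq_zero_iff, sub_eq_zero] at hyz
  rw [mul_eq_zero, or_iff_right hz.ne', sq_eq_zero_iff, sub_eq_zero] at hxy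
  exact ⟨hxy, hyz⟩

lemma three_mul_mul_sum_le_sq_sum_mul (x y z : ℝ) :
    3 * (x * y * z) * (x + y + z) ≤ (x * y + y * z + z * x) ^ 2 := by
  nlinarith [sq_nonneg (x * y - y * z), sq_nonneg (y * z - z * x), sq_nonneg (z * x - x * y)]

lemma mul_sum_pow_three_le_sq_prod_add (hx : 0 ≤ x) (hy : 0 ≤ y) (hz : 0 ≤ z) :
    64 * (x * y * z * (x + y + z) ^ 3) ≤ 27 * ((x + y) * (y + z) * (z + x)) ^ 2 := by
  have hle := eight_mul_sum_mul_le_nine_mul_prod_add hx hy hz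
  have hsq := pow_le_pow_left₀ (by positivity) hle 2
  have hq := mul_le_mul_of_nonneg_left (three_mul_mul_sum_le_sq_sum_mul x y z)
    (sq_nonneg (x + y + z))
  nlinarith

lemma mul_sum_pow_three_eq_sq_prod_add_iff (hx : 0 < x) (hy : 0 < y) (hz : 0 < z) :
    64 * (x * y * z * (x + y + z) ^ 3) = 27 * ((x + y) * (y + z) * (z + x)) ^ 2 ↔
      x = y ∧ y = z := by
  refine ⟨fun h ↦ eq_and_eq_of_nine_mul_prod_add_eq hx hy hz ?_, ?_⟩
  · -- a strict first inequality would make the squared chain strict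
    by_contra hne
    have hlt := lt_of_le_of_ne (eight_mul_sum_mul_le_nine_mul_prod_add hx.le hy.le hz.le)
      (Ne.symm hne)
    have hsq := pow_lt_pow_left₀ hlt (by positivity) two_ne_zero
    have hq := mul_le_mul_of_nonneg_left (three_mul_mul_sum_le_sq_sum_mul x y z)
      (sq_nonneg (x + y + z))
    nlinarith
  · rintro ⟨rfl, rfl⟩
    ring

end SymmetricInequalities

section UnitSphere

variable {a b c : ℝ}

lemma prod_one_sub_sq_eq_prod_sq_add (h : a ^ 2 + b ^ 2 + c ^ 2 = 1) :
    (1 - a ^ 2) * (1 - b ^ 2) * (1 - c ^ 2) =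
      (a ^ 2 + b ^ 2) * (b ^ 2 + c ^ 2) * (c ^ 2 + a ^ 2) := by
  rw [← h]
  ring

lemma sq_eight_mul_mul_eq (h : a ^ 2 + b ^ 2 + c ^ 2 = 1) :
    (8 * (a * b * c)) ^ 2 = 64 * (a ^ 2 * b ^ 2 * c ^ 2 * (a ^ 2 + b ^ 2 + c ^ 2) ^ 3) := by
  rw [h]
  ring

lemma sq_three_mul_sqrt_three_mul (t : ℝ) : (3 * √3 * t) ^ 2 = 27 * t ^ 2 := by
  rw [mul_pow, mul_pow, sq_sqrt zero_le_three]
  norm_num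

lemma eight_mul_mul_le_three_mul_sqrt_three_mul_prod (h : a ^ 2 + b ^ 2 + c ^ 2 = 1) :
    8 * (a * b * c) ≤ 3 * √3 * ((1 - a ^ 2) * (1 - b ^ 2) * (1 - c ^ 2)) := by
  rw [prod_one_sub_sq_eq_prod_sq_add h]
  refine abs_le_of_sq_le_sq' ?_ (by positivity) |>.2
  rw [sq_eight_mul_mul_eq h, sq_three_mul_sqrt_three_mul]
  exact mul_sum_pow_three_le_sq_prod_add (sq_nonneg a) (sq_nonneg b) (sq_nonneg c)

lemma eight_mul_mul_eq_three_mul_sqrt_three_mul_prod_iff (ha : 0 < a) (hb : 0 < b) (hc : 0 < c)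
    (h : a ^ 2 + b ^ 2 + c ^ 2 = 1) :
    8 * (a * b * c) = 3 * √3 * ((1 - a ^ 2) * (1 - b ^ 2) * (1 - c ^ 2)) ↔ a = b ∧ b = c := by
  rw [prod_one_sub_sq_eq_prod_sq_add h,
    ← pow_left_inj₀ (by positivity) (by positivity) two_ne_zero,
    sq_eight_mul_mul_eq h, sq_three_mul_sqrt_three_mul,
    mul_sum_pow_three_eq_sq_prod_add_iff (by positivity) (by positivity) (by positivity),
    sq_eq_sq₀ ha.le hb.le, sq_eq_sq₀ hb.le hc.le]

lemma eq_and_eq_iff_eq_inv_sqrt_three (ha : 0 < a) (hb : 0 < b) (hc : 0 < c)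
    (h : a ^ 2 + b ^ 2 + c ^ 2 = 1) :
    a = b ∧ b = c ↔ a = 1 / √3 ∧ b = 1 / √3 ∧ c = 1 / √3 := by
  refine ⟨?_, fun ⟨ha', hb', hc'⟩ ↦ ⟨ha'.trans hb'.symm, hb'.trans hc'.symm⟩⟩
  rintro ⟨rfl, rfl⟩
  have hsq : a ^ 2 = (1 / √3) ^ 2 := by
    rw [div_pow, one_pow, sq_sqrt zero_le_three]
    linarith
  have := (sq_eq_sq₀ ha.le (by positivity)).1 hsq
  exact ⟨this, this, this⟩

end UnitSphere

/-- Among homogeneous Lagrangian tori in ℂP², the Clifford torus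
(`r₁ = r₂ = r₃ = 1/√3`) attains the minimum `4π²/(3√3)` of the energy functional
`E(Σ_{r₁,r₂,r₃}) = π²(1−r₁²)(1−r₂²)(1−r₃²)/(2r₁r₂r₃)`. -/
theorem clifford_torus_minimizes_energy_among_homogeneous_tori
    (r1 r2 r3 : ℝ) (h1 : 0 < r1) (h2 : 0 < r2) (h3 : 0 < r3)
    (hsum : r1^2 + r2^2 + r3^2 = 1) :
    π^2 * (1 - r1^2) * (1 - r2^2) * (1 - r3^2) / (2 * r1 * r2 * r3) ≥
      4 * π^2 / (3 * Real.sqrt 3) ∧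
    (π^2 * (1 - r1^2) * (1 - r2^2) * (1 - r3^2) / (2 * r1 * r2 * r3) =
        4 * π^2 / (3 * Real.sqrt 3) ↔
      r1 = 1 / Real.sqrt 3 ∧ r2 = 1 / Real.sqrt 3 ∧ r3 = 1 / Real.sqrt 3) := by
  have hmin : 0 < 4 * π ^ 2 / (3 * √3) := by positivity
  have hden : 0 < 8 * (r1 * r2 * r3) := by positivity
  have hE : π^2 * (1 - r1^2) * (1 - r2^2) * (1 - r3^2) / (2 * r1 * r2 * r3) =
      4 * π ^ 2 / (3 * √3) *
        (3 * √3 * ((1 - r1 ^ 2) * (1 - r2 ^ 2) * (1 - r3 ^ 2)) / (8 * (r1 * r2 * r3))) := by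
    field_simp
    ring
  rw [hE, ge_iff_le, le_mul_iff_one_le_right hmin, one_le_div hden, mul_eq_left₀ hmin.ne',
    div_eq_one_iff_eq hden.ne', eq_comm,
    eight_mul_mul_eq_three_mul_sqrt_three_mul_prod_iff h1 h2 h3 hsum,
    eq_and_eq_iff_eq_inv_sqrt_three h1 h2 h3 hsum]
  exact ⟨eight_mul_mul_le_three_mul_sqrt_three_mul_prod hsum, Iff.rfl⟩
end

section
/- Let m ≥ n ≥ 1 and k ≤ −1 be integers, and let p = gcd(m−k, n−k). Then (π/(2√2·p)) · ∫₀^{2π} (4k(m−n)cos(2x) + (m+n−k)²) / √(2mn − k(m+n) + k(m−n)cos(2x)) dx > 4π²/(3√3). That is, the energy E(Σ_{m,n,k}) of the Hamiltonian-minimal Lagrangian torus Σ_{m,n,k} exceeds the energy E(Σ_Cl) = 4π²/(3√3) of the Clifford torus. -/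
/-!
Since `k (m - n) ≤ 0`, the denominator `2mn - k(m+n) + k(m-n) cos 2x` is at most its value
`2m(n-k)` at `cos 2x = -1`, while the numerator is nonnegative. The `cos 2x` term of the numerator
integrates to zero, so the energy is at least `π² (m + b)² / (2 p √(m b))` with `b = n - k ≥ p`.
AM–GM for `m, b/3, b/3, b/3` gives `(m + b)⁴ ≥ 256 m b³ / 27`, so this bound is at least
`8π²/(3√3)`, the value of the energy at `(m, n, k) = (1, 1, -2)`, and twice the claimed bound.
-/

open Real intervalIntegral

theorem sixteen_mul_mul_sqrt_le {a b : ℝ} (ha : 0 ≤ a) (hb : 0 ≤ b) :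
    16 * b * √(a * b) ≤ 3 * √3 * (a + b) ^ 2 := by
  have amgm : 256 * a * b ^ 3 ≤ 27 * (a + b) ^ 4 := by
    have : 0 ≤ (b - 3 * a) ^ 2 * (3 * a ^ 2 + 14 * a * b + 27 * b ^ 2) := by positivity
    linear_combination this
  refine le_of_pow_le_pow_left₀ two_ne_zero (by positivity) ?_
  simp only [mul_pow, sq_sqrt (mul_nonneg ha hb), sq_sqrt (zero_le_three (α := ℝ))]
  linear_combination amgm

noncomputable section

namespace MnkTorus

def numerator (m n k x : ℝ) : ℝ :=
  4 * k * (m - n) * cos (2 * x) + (m + n - k) ^ 2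

def denominator (m n k x : ℝ) : ℝ :=
  2 * m * n - k * (m + n) + k * (m - n) * cos (2 * x)

def energy (m n k p : ℝ) : ℝ :=
  π / (2 * √2 * p) * ∫ x in (0 : ℝ)..2 * π, numerator m n k x / √(denominator m n k x)

theorem continuous_numerator (m n k : ℝ) : Continuous (numerator m n k) := by
  unfold numerator; fun_prop

theorem continuous_denominator (m n k : ℝ) : Continuous (denominator m n k) := by
  unfold denominator; fun_prop

theorem integral_numerator (m n k : ℝ) :
    ∫ x in (0 : ℝ)..2 * π, numerator m n k x = 2 * π * (m + n - k) ^ 2 := by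
  have hcos : ∫ x in (0 : ℝ)..2 * π, cos (2 * x) = 0 := by
    rw [integral_comp_mul_left (fun x => cos x) two_ne_zero, integral_cos,
      show (2 : ℝ) * (2 * π) = (4 : ℕ) * π by push_cast; ring, sin_nat_mul_pi]
    simp
  simp only [numerator]
  rw [integral_add ((by fun_prop : Continuous _).intervalIntegrable _ _) intervalIntegrable_const,
    integral_const_mul, hcos]
  simp

variable {m n k : ℝ}

theorem denominator_pos (hn : 0 < n) (hnm : n ≤ m) (hk : k < 0) (x : ℝ) :
    0 < denominator m n k x := by
  have : denominator m n k x = 2 * n * (m - k) - k * (m - n) * (1 - cos (2 * x)) := by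
    simp only [denominator]; ring
  rw [this]
  nlinarith [cos_le_one (2 * x), mul_nonneg (neg_nonneg.2 hk.le) (sub_nonneg.2 hnm)]

theorem denominator_le (hnm : n ≤ m) (hk : k < 0) (x : ℝ) :
    denominator m n k x ≤ 2 * m * (n - k) := by
  have : denominator m n k x = 2 * m * (n - k) + k * (m - n) * (1 + cos (2 * x)) := by
    simp only [denominator]; ring
  rw [this]
  nlinarith [neg_one_le_cos (2 * x), mul_nonneg (neg_nonneg.2 hk.le) (sub_nonneg.2 hnm)]

theorem numerator_nonneg (hn : 0 < n) (hnm : n ≤ m) (hk : k < 0) (x : ℝ) :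
    0 ≤ numerator m n k x := by
  have : numerator m n k x =
      (m + n + k) ^ 2 - 8 * k * n - 4 * k * (m - n) * (1 - cos (2 * x)) := by
    simp only [numerator]; ring
  rw [this]
  nlinarith [cos_le_one (2 * x), mul_nonneg (neg_nonneg.2 hk.le) (sub_nonneg.2 hnm),
    sq_nonneg (m + n + k), mul_pos (neg_pos.2 hk) hn]

theorem le_integral_numerator_div_sqrt (hn : 0 < n) (hnm : n ≤ m) (hk : k < 0) :
    2 * π * (m + n - k) ^ 2 / √(2 * m * (n - k)) ≤
      ∫ x in (0 : ℝ)..2 * π, numerator m n k x / √(denominator m n k x) := by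
  have hden x := denominator_pos hn hnm hk x
  rw [← integral_numerator, ← integral_div]
  refine integral_mono_on (by positivity)
    (((continuous_numerator m n k).div_const _).intervalIntegrable _ _) ?_ fun x _ => ?_
  · refine Continuous.intervalIntegrable ?_ _ _
    exact (continuous_numerator m n k).div (continuous_denominator m n k).sqrt
      fun x => (sqrt_pos.2 (hden x)).ne'
  · gcongr
    · exact numerator_nonneg hn hnm hk x
    · exact sqrt_pos.2 (hden x)
    · exact denominator_le hnm hk x

theorem eight_pi_sq_div_le_energy (hn : 0 < n) (hnm : n ≤ m) (hk : k < 0) {p : ℝ} (hp : 0 < p)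
    (hpnk : p ≤ n - k) : 8 * π ^ 2 / (3 * √3) ≤ energy m n k p := by
  have hm : 0 < m := hn.trans_le hnm
  have hb : 0 < n - k := by linarith
  calc 8 * π ^ 2 / (3 * √3)
      ≤ π ^ 2 * (m + (n - k)) ^ 2 / (2 * p * √(m * (n - k))) := by
        rw [div_le_div_iff₀ (by positivity) (by positivity)]
        have key : 16 * p * √(m * (n - k)) ≤ 3 * √3 * (m + (n - k)) ^ 2 :=
          le_trans (by gcongr) (sixteen_mul_mul_sqrt_le hm.le hb.le)
        linear_combination π ^ 2 * key
    _ = π / (2 * √2 * p) * (2 * π * (m + n - k) ^ 2 / √(2 * m * (n - k))) := by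
        rw [mul_assoc 2 m, sqrt_mul zero_le_two]
        field_simp
        rw [sq_sqrt zero_le_two]
        ring
    _ ≤ energy m n k p := mul_le_mul_of_nonneg_left (le_integral_numerator_div_sqrt hn hnm hk) (by positivity)

end MnkTorus

end

/-- The energy of the Hamiltonian-minimal Lagrangian torus `Σ_{m,n,k}` (with
`m ≥ n ≥ 1`, `k ≤ −1`, `p = gcd(m−k, n−k)`) exceeds the energy `4π²/(3√3)` of the
Clifford torus. -/
theorem energy_of_mnk_torus_gt_clifford
    (m n k : ℤ) (hmn : n ≤ m) (hn : 1 ≤ n) (hk : k ≤ -1)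
    (p : ℕ) (hp : p = Int.gcd (m - k) (n - k)) :
    (π / (2 * Real.sqrt 2 * (p : ℝ))) *
      ∫ x in (0:ℝ)..(2 * π),
        (4 * (k : ℝ) * ((m : ℝ) - (n : ℝ)) * Real.cos (2 * x)
          + ((m : ℝ) + (n : ℝ) - (k : ℝ))^2) /
        Real.sqrt (2 * (m : ℝ) * (n : ℝ) - (k : ℝ) * ((m : ℝ) + (n : ℝ))
          + (k : ℝ) * ((m : ℝ) - (n : ℝ)) * Real.cos (2 * x))
      > 4 * π^2 / (3 * Real.sqrt 3) := by
  have hnk : 0 < n - k := by omega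
  have hp0 : (0 : ℝ) < p := by
    rw [hp]; exact_mod_cast Int.gcd_pos_of_ne_zero_right _ hnk.ne'
  have hpnk : (p : ℝ) ≤ n - k := by
    rw [hp]; exact_mod_cast Int.le_of_dvd hnk (Int.gcd_dvd_right _ _)
  have hclifford : 4 * π ^ 2 / (3 * √3) < 8 * π ^ 2 / (3 * √3) := by
    gcongr; norm_num
  exact hclifford.trans_le <| MnkTorus.eight_pi_sq_div_le_energy (by exact_mod_cast hn)
    (by exact_mod_cast hmn) (by exact_mod_cast hk.trans_lt neg_one_lt_zero) hp0 hpnk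
end

section
/- Let m ≥ n > 0 > k be integers, and define u₁(x) = sin(x)·√(k/(k−m)), u₂(x) = cos(x)·√(k/(k−n)), u₃(x) = √(n·cos²x/(n−k) + m·sin²x/(m−k)), and r(x,y) = (u₁(x)e^{2πimy}, u₂(x)e^{2πiny}, u₃(x)e^{2πiky}) ∈ ℂ³. Then for all (x,y): ⟨r,r⟩ = 1, ⟨r_x,r⟩ = ⟨r_y,r⟩ = ⟨r_x,r_y⟩ = 0, ⟨r_x,r_x⟩ = −k(m+n−(m−n)cos 2x)/(2mn − k(m+n) + k(m−n)cos 2x), and ⟨r_y,r_y⟩ = −2kπ²(m+n−(m−n)cos 2x). In particular the induced metric on the surface Σ_{m,n,k} = image of r under the Hopf projection is ds² = 2e^{v₁(x)}dx² + 2e^{v₂(x)}dy² with 2e^{v₁} = ⟨r_x,r_x⟩ and 2e^{v₂} = ⟨r_y,r_y⟩ as above. -/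
open Complex Real

/-!
With `c = (m, n, k)`, the lift is `r(x, y) = (uⱼ(x) e^{2πi cⱼ y})ⱼ`. The phases have modulus one
and cancel in every Hermitian product, so all six quantities become real sums in the profile `u`:
`⟨r, r⟩ = Σ uⱼ²`, `⟨r_x, r⟩ = Σ uⱼ' uⱼ`, `⟨r_y, r⟩ = 2πi Σ cⱼ uⱼ²`, `⟨r_x, r_y⟩ = -2πi Σ cⱼ uⱼ' uⱼ`,
`⟨r_x, r_x⟩ = Σ uⱼ'²`, `⟨r_y, r_y⟩ = 4π² Σ cⱼ² uⱼ²`. Because `k/(k-m) + m/(m-k) = 1` (and likewise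
for `n`), the profile satisfies `Σ uⱼ² = 1` and `Σ cⱼ uⱼ² = 0` identically in `x`; differentiating
these identities kills the two mixed products, and also gives `u₃ u₃' = -(u₁ u₁' + u₂ u₂')`, which
determines `u₃'²` without differentiating the square root by hand.
-/

noncomputable def phase {ι : Type*} (c : ι → ℝ) (y : ℝ) : ι → ℂ :=
  fun j => exp (2 * π * c j * y * I)

noncomputable def phaseLift {ι : Type*} (u : ι → ℝ → ℝ) (c : ι → ℝ) (x y : ℝ) : ι → ℂ :=
  (fun j => (u j x : ℂ)) * phase c y

theorem phase_mul_conj {ι : Type*} (c : ι → ℝ) (y : ℝ) (j : ι) :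
    phase c y j * starRingEnd ℂ (phase c y j) = 1 := by
  rw [phase, ← Complex.exp_conj, ← Complex.exp_add, ← Complex.exp_zero]
  congr 1
  simp only [map_mul, map_ofNat, conj_ofReal, conj_I]
  ring

theorem herm_mul_phase (a b : Fin 3 → ℂ) (c : Fin 3 → ℝ) (y : ℝ) :
    herm (a * phase c y) (b * phase c y) = herm a b := by
  refine Finset.sum_congr rfl fun j _ => ?_
  simp only [Pi.mul_apply, map_mul]
  linear_combination a j * starRingEnd ℂ (b j) * phase_mul_conj c y j

theorem hasDerivAt_phase {ι : Type*} [Fintype ι] (c : ι → ℝ) (y : ℝ) :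
    HasDerivAt (phase c) ((fun j => 2 * π * c j * I) * phase c y) y := by
  refine hasDerivAt_pi.mpr fun j => ?_
  have := ((hasDerivAt_id (y : ℂ)).const_mul (2 * π * c j : ℂ)).mul_const I |>.comp_ofReal.cexp
  simpa [phase, mul_comm] using this

theorem pdx_phaseLift {ι : Type*} [Fintype ι] {u : ι → ℝ → ℝ} (c : ι → ℝ) {x : ℝ}
    (hu : ∀ j, DifferentiableAt ℝ (u j) x) (y : ℝ) :
    pdx (phaseLift u c) x y = (fun j => ((deriv (u j) x : ℝ) : ℂ)) * phase c y :=
  (hasDerivAt_pi.mpr fun j => (hu j).hasDerivAt.ofReal_comp.mul_const _).deriv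

theorem pdy_phaseLift {ι : Type*} [Fintype ι] (u : ι → ℝ → ℝ) (c : ι → ℝ) (x y : ℝ) :
    pdy (phaseLift u c) x y = (fun j => (u j x : ℂ) * (2 * π * c j * I)) * phase c y := by
  have := ((hasDerivAt_phase c y).const_mul fun j => (u j x : ℂ)).deriv
  rwa [← mul_assoc] at this

theorem sum_mul_deriv_mul_self_eq_zero {ι : Type*} [Fintype ι] {w : ι → ℝ} {u : ι → ℝ → ℝ}
    {C : ℝ} (h : ∀ x, ∑ j, w j * u j x ^ 2 = C) {x : ℝ}
    (hu : ∀ j, DifferentiableAt ℝ (u j) x) :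
    ∑ j, w j * (deriv (u j) x * u j x) = 0 := by
  have hd : HasDerivAt (fun x => ∑ j, w j * u j x ^ 2)
      (∑ j, w j * (2 * u j x ^ 1 * deriv (u j) x)) x :=
    HasDerivAt.fun_sum fun j _ => ((hu j).hasDerivAt.pow 2).const_mul (w j)
  have h0 := hd.unique (by simpa only [h] using hasDerivAt_const x C)
  rw [← mul_eq_zero_iff_left two_ne_zero, Finset.mul_sum, ← h0]
  exact Finset.sum_congr rfl fun j _ => by ring

section PhaseLift

variable {u : Fin 3 → ℝ → ℝ} (c : Fin 3 → ℝ) {x : ℝ} (y : ℝ)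

theorem herm_phaseLift_self (hnorm : ∑ j, u j x ^ 2 = 1) :
    herm (phaseLift u c x y) (phaseLift u c x y) = 1 := by
  rw [phaseLift, herm_mul_phase]
  simp only [herm, conj_ofReal, ← sq]
  exact_mod_cast hnorm

theorem herm_pdx_phaseLift_phaseLift (hu : ∀ j, DifferentiableAt ℝ (u j) x)
    (horth : ∑ j, deriv (u j) x * u j x = 0) :
    herm (pdx (phaseLift u c) x y) (phaseLift u c x y) = 0 := by
  rw [pdx_phaseLift c hu, phaseLift, herm_mul_phase]
  simp only [herm, conj_ofReal]
  exact_mod_cast horth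

theorem herm_pdy_phaseLift_phaseLift (horth : ∑ j, c j * u j x ^ 2 = 0) :
    herm (pdy (phaseLift u c) x y) (phaseLift u c x y) = 0 := by
  rw [pdy_phaseLift, phaseLift, herm_mul_phase]
  have := congrArg ((↑) : ℝ → ℂ) horth
  simp only [herm, Fin.sum_univ_three, conj_ofReal] at this ⊢
  push_cast at this
  linear_combination (2 * π * I) * this

theorem herm_pdx_phaseLift_pdy_phaseLift (hu : ∀ j, DifferentiableAt ℝ (u j) x)
    (horth : ∑ j, c j * (deriv (u j) x * u j x) = 0) :
    herm (pdx (phaseLift u c) x y) (pdy (phaseLift u c) x y) = 0 := by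
  rw [pdx_phaseLift c hu, pdy_phaseLift, herm_mul_phase]
  have := congrArg ((↑) : ℝ → ℂ) horth
  simp only [herm, Fin.sum_univ_three, map_mul, map_ofNat, conj_ofReal, conj_I] at this ⊢
  push_cast at this
  linear_combination (-2 * π * I) * this

theorem herm_pdx_phaseLift_self (hu : ∀ j, DifferentiableAt ℝ (u j) x) :
    herm (pdx (phaseLift u c) x y) (pdx (phaseLift u c) x y)
      = ((∑ j, deriv (u j) x ^ 2 : ℝ) : ℂ) := by
  rw [pdx_phaseLift c hu, herm_mul_phase]
  simp only [herm, conj_ofReal, ← sq]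
  push_cast
  rfl

theorem herm_pdy_phaseLift_self :
    herm (pdy (phaseLift u c) x y) (pdy (phaseLift u c) x y)
      = ((4 * π ^ 2 * ∑ j, c j ^ 2 * u j x ^ 2 : ℝ) : ℂ) := by
  rw [pdy_phaseLift, herm_mul_phase]
  simp only [herm, Fin.sum_univ_three, map_mul, map_ofNat, conj_ofReal, conj_I]
  push_cast
  linear_combination
    (-(4 * π ^ 2) * (c 0 ^ 2 * u 0 x ^ 2 + c 1 ^ 2 * u 1 x ^ 2 + c 2 ^ 2 * u 2 x ^ 2) : ℂ) * I_sq

end PhaseLift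

theorem sq_sqrt_div_sub {a k : ℝ} (hk : k < 0) (ha : 0 < a) : √(k / (k - a)) ^ 2 = k / (k - a) :=
  sq_sqrt (div_nonneg_of_nonpos hk.le (by linarith))

noncomputable def mnkProfile (m n k : ℝ) : Fin 3 → ℝ → ℝ :=
  ![fun x => Real.sin x * √(k / (k - m)), fun x => Real.cos x * √(k / (k - n)),
    fun x => √(n * Real.cos x ^ 2 / (n - k) + m * Real.sin x ^ 2 / (m - k))]

namespace mnkProfile

variable {m n k : ℝ}

theorem radicand_pos (hm : 0 < m) (hn : 0 < n) (hk : k < 0) (x : ℝ) :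
    0 < n * Real.cos x ^ 2 / (n - k) + m * Real.sin x ^ 2 / (m - k) := by
  have hn' : 0 < n / (n - k) := div_pos hn (by linarith)
  have hm' : 0 < m / (m - k) := div_pos hm (by linarith)
  rw [mul_div_right_comm, mul_div_right_comm m]
  have hc := mul_nonneg hn'.le (sq_nonneg (Real.cos x))
  have hs := mul_nonneg hm'.le (sq_nonneg (Real.sin x))
  nlinarith [Real.sin_sq_add_cos_sq x, mul_pos hn' hm']

theorem sq_apply_zero (hm : 0 < m) (hk : k < 0) (x : ℝ) :
    mnkProfile m n k 0 x ^ 2 = Real.sin x ^ 2 * (k / (k - m)) :=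
  (mul_pow _ _ 2).trans (congrArg _ (sq_sqrt_div_sub hk hm))

theorem sq_apply_one (hn : 0 < n) (hk : k < 0) (x : ℝ) :
    mnkProfile m n k 1 x ^ 2 = Real.cos x ^ 2 * (k / (k - n)) :=
  (mul_pow _ _ 2).trans (congrArg _ (sq_sqrt_div_sub hk hn))

theorem sq_apply_two (hm : 0 < m) (hn : 0 < n) (hk : k < 0) (x : ℝ) :
    mnkProfile m n k 2 x ^ 2 = n * Real.cos x ^ 2 / (n - k) + m * Real.sin x ^ 2 / (m - k) :=
  sq_sqrt (radicand_pos hm hn hk x).le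

theorem sum_sq (hm : 0 < m) (hn : 0 < n) (hk : k < 0) (x : ℝ) :
    ∑ j, mnkProfile m n k j x ^ 2 = 1 := by
  obtain ⟨_, _, _, _⟩ : k - m ≠ 0 ∧ k - n ≠ 0 ∧ m - k ≠ 0 ∧ n - k ≠ 0 :=
    ⟨by linarith, by linarith, by linarith, by linarith⟩
  rw [Fin.sum_univ_three, sq_apply_zero hm hk, sq_apply_one hn hk, sq_apply_two hm hn hk,
    Real.sin_sq]
  field_simp
  ring

theorem sum_weight_mul_sq (hm : 0 < m) (hn : 0 < n) (hk : k < 0) (x : ℝ) :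
    ∑ j, ![m, n, k] j * mnkProfile m n k j x ^ 2 = 0 := by
  obtain ⟨_, _, _, _⟩ : k - m ≠ 0 ∧ k - n ≠ 0 ∧ m - k ≠ 0 ∧ n - k ≠ 0 :=
    ⟨by linarith, by linarith, by linarith, by linarith⟩
  rw [Fin.sum_univ_three]
  change m * _ + n * _ + k * _ = 0
  rw [sq_apply_zero hm hk, sq_apply_one hn hk, sq_apply_two hm hn hk]
  field_simp
  ring

theorem sum_weight_sq_mul_sq (hm : 0 < m) (hn : 0 < n) (hk : k < 0) (x : ℝ) :
    4 * π ^ 2 * ∑ j, ![m, n, k] j ^ 2 * mnkProfile m n k j x ^ 2 =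
      -2 * k * π ^ 2 * (m + n - (m - n) * Real.cos (2 * x)) := by
  obtain ⟨_, _, _, _⟩ : k - m ≠ 0 ∧ k - n ≠ 0 ∧ m - k ≠ 0 ∧ n - k ≠ 0 :=
    ⟨by linarith, by linarith, by linarith, by linarith⟩
  rw [Fin.sum_univ_three]
  change _ * (m ^ 2 * _ + n ^ 2 * _ + k ^ 2 * _) = _
  rw [sq_apply_zero hm hk, sq_apply_one hn hk, sq_apply_two hm hn hk, Real.cos_two_mul,
    Real.sin_sq]
  field_simp
  ring

theorem differentiableAt (hm : 0 < m) (hn : 0 < n) (hk : k < 0) (j : Fin 3) (x : ℝ) :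
    DifferentiableAt ℝ (mnkProfile m n k j) x := by
  fin_cases j
  · exact Real.differentiableAt_sin.mul_const _
  · exact Real.differentiableAt_cos.mul_const _
  · exact DifferentiableAt.sqrt (by fun_prop) (radicand_pos hm hn hk x).ne'

theorem sum_deriv_mul_self (hm : 0 < m) (hn : 0 < n) (hk : k < 0) (x : ℝ) :
    ∑ j, deriv (mnkProfile m n k j) x * mnkProfile m n k j x = 0 := by
  simpa only [one_mul] using sum_mul_deriv_mul_self_eq_zero (w := fun _ => 1)
    (by simpa only [one_mul] using sum_sq hm hn hk) (differentiableAt hm hn hk · x)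

theorem deriv_apply_zero (x : ℝ) : deriv (mnkProfile m n k 0) x = Real.cos x * √(k / (k - m)) :=
  ((Real.hasDerivAt_sin x).mul_const _).deriv

theorem deriv_apply_one (x : ℝ) : deriv (mnkProfile m n k 1) x = -Real.sin x * √(k / (k - n)) :=
  ((Real.hasDerivAt_cos x).mul_const _).deriv

theorem deriv_apply_two_sq (hm : 0 < m) (hn : 0 < n) (hk : k < 0) (x : ℝ) :
    deriv (mnkProfile m n k 2) x ^ 2 =
      (Real.sin x * Real.cos x * (k / (k - m) - k / (k - n))) ^ 2 /
        (n * Real.cos x ^ 2 / (n - k) + m * Real.sin x ^ 2 / (m - k)) := by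
  have horth := sum_deriv_mul_self hm hn hk x
  rw [Fin.sum_univ_three, deriv_apply_zero, deriv_apply_one] at horth
  change _ * (Real.sin x * _) + _ * (Real.cos x * _) + _ = 0 at horth
  rw [eq_div_iff (radicand_pos hm hn hk x).ne', ← sq_apply_two hm hn hk,
    ← sq_sqrt_div_sub hk hm, ← sq_sqrt_div_sub hk hn]
  linear_combination (deriv (mnkProfile m n k 2) x * mnkProfile m n k 2 x
    - Real.sin x * Real.cos x * (√(k / (k - m)) ^ 2 - √(k / (k - n)) ^ 2)) * horth

theorem denominator_eq_mul_radicand (hm : 0 < m) (hn : 0 < n) (hk : k < 0) (x : ℝ) :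
    2 * m * n - k * (m + n) + k * (m - n) * Real.cos (2 * x) =
      2 * (m - k) * (n - k) * (n * Real.cos x ^ 2 / (n - k) + m * Real.sin x ^ 2 / (m - k)) := by
  obtain ⟨_, _⟩ : m - k ≠ 0 ∧ n - k ≠ 0 := ⟨by linarith, by linarith⟩
  rw [Real.cos_two_mul, Real.sin_sq]
  field_simp
  ring

theorem sum_deriv_sq (hm : 0 < m) (hn : 0 < n) (hk : k < 0) (x : ℝ) :
    ∑ j, deriv (mnkProfile m n k j) x ^ 2 =
      -k * (m + n - (m - n) * Real.cos (2 * x)) /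
        (2 * m * n - k * (m + n) + k * (m - n) * Real.cos (2 * x)) := by
  obtain ⟨_, _, _, _⟩ : k - m ≠ 0 ∧ k - n ≠ 0 ∧ m - k ≠ 0 ∧ n - k ≠ 0 :=
    ⟨by linarith, by linarith, by linarith, by linarith⟩
  rw [Fin.sum_univ_three, deriv_apply_zero, deriv_apply_one, deriv_apply_two_sq hm hn hk,
    denominator_eq_mul_radicand hm hn hk, mul_pow, neg_mul, neg_sq, mul_pow,
    sq_sqrt_div_sub hk hm, sq_sqrt_div_sub hk hn]
  have hg := (radicand_pos hm hn hk x).ne'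
  set g := n * Real.cos x ^ 2 / (n - k) + m * Real.sin x ^ 2 / (m - k) with hg_def
  field_simp
  rw [hg_def, Real.sin_sq, Real.cos_two_mul]
  field_simp
  ring

end mnkProfile

/-- The map `r(x,y) = (u₁(x)e^{2πimy}, u₂(x)e^{2πiny}, u₃(x)e^{2πiky})` is a horizontal
lift of `Σ_{m,n,k}` with induced metric `ds² = 2e^{v₁(x)}dx² + 2e^{v₂(x)}dy²`, where
`2e^{v₁} = −k(m+n−(m−n)cos2x)/(2mn−k(m+n)+k(m−n)cos2x)` and
`2e^{v₂} = −2kπ²(m+n−(m−n)cos2x)`. -/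
theorem mnk_lift_is_horizontal
    (m n k : ℤ) (hmn : n ≤ m) (hn : 0 < n) (hk : k < 0)
    (u1 u2 u3 : ℝ → ℝ)
    (hu1 : ∀ x, u1 x = Real.sin x * Real.sqrt ((k : ℝ) / ((k : ℝ) - (m : ℝ))))
    (hu2 : ∀ x, u2 x = Real.cos x * Real.sqrt ((k : ℝ) / ((k : ℝ) - (n : ℝ))))
    (hu3 : ∀ x, u3 x = Real.sqrt ((n : ℝ) * (Real.cos x)^2 / ((n : ℝ) - (k : ℝ))
      + (m : ℝ) * (Real.sin x)^2 / ((m : ℝ) - (k : ℝ))))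
    (r : ℝ → ℝ → Fin 3 → ℂ)
    (hr : ∀ x y, r x y =
      ![(u1 x : ℂ) * Complex.exp (2 * Real.pi * (m : ℝ) * y * Complex.I),
        (u2 x : ℂ) * Complex.exp (2 * Real.pi * (n : ℝ) * y * Complex.I),
        (u3 x : ℂ) * Complex.exp (2 * Real.pi * (k : ℝ) * y * Complex.I)]) :
    ∀ x y,
      herm (r x y) (r x y) = 1 ∧
      herm (pdx r x y) (r x y) = 0 ∧
      herm (pdy r x y) (r x y) = 0 ∧
      herm (pdx r x y) (pdy r x y) = 0 ∧
      herm (pdx r x y) (pdx r x y) =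
        ((-(k : ℝ) * ((m : ℝ) + (n : ℝ) - ((m : ℝ) - (n : ℝ)) * Real.cos (2 * x)) /
          (2 * (m : ℝ) * (n : ℝ) - (k : ℝ) * ((m : ℝ) + (n : ℝ))
            + (k : ℝ) * ((m : ℝ) - (n : ℝ)) * Real.cos (2 * x)) : ℝ) : ℂ) ∧
      herm (pdy r x y) (pdy r x y) =
        ((-2 * (k : ℝ) * Real.pi^2 *
          ((m : ℝ) + (n : ℝ) - ((m : ℝ) - (n : ℝ)) * Real.cos (2 * x)) : ℝ) : ℂ) := by
  have hm₀ : (0 : ℝ) < m := by exact_mod_cast hn.trans_le hmn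
  have hn₀ : (0 : ℝ) < n := by exact_mod_cast hn
  have hk₀ : (k : ℝ) < 0 := by exact_mod_cast hk
  obtain rfl : r = phaseLift (mnkProfile m n k) ![(m : ℝ), n, k] := by
    funext x y j
    rw [hr]
    fin_cases j <;> simp [phaseLift, phase, mnkProfile, hu1, hu2, hu3]
  intro x y
  have hd := (mnkProfile.differentiableAt hm₀ hn₀ hk₀ · x)
  exact ⟨herm_phaseLift_self _ y (mnkProfile.sum_sq hm₀ hn₀ hk₀ x),
    herm_pdx_phaseLift_phaseLift _ y hd (mnkProfile.sum_deriv_mul_self hm₀ hn₀ hk₀ x),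
    herm_pdy_phaseLift_phaseLift _ y (mnkProfile.sum_weight_mul_sq hm₀ hn₀ hk₀ x),
    herm_pdx_phaseLift_pdy_phaseLift _ y hd
      (sum_mul_deriv_mul_self_eq_zero (mnkProfile.sum_weight_mul_sq hm₀ hn₀ hk₀) hd),
    by rw [herm_pdx_phaseLift_self _ y hd, mnkProfile.sum_deriv_sq hm₀ hn₀ hk₀],
    by rw [herm_pdy_phaseLift_self, mnkProfile.sum_weight_sq_mul_sq hm₀ hn₀ hk₀]⟩
end
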